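/- arXiv:math/0307176 — 5 statements merged into one kernel-verified Lean document; each statement's English description precedes it below -/
import Mathlib

section
/- For a finite crystallographic simply-laced root system A with Coxeter number h, for any two roots α, β one has Σ_{γ∈A} ⟨α,γ⟩⟨β,γ⟩ = 2h⟨α,β⟩. -/
open scoped RealInnerProductSpace

open Module Module.End

/-! The operator `T x = ∑ γ ∈ A, ⟪γ, x⟫ • γ` is symmetric and commutes with every reflection in
a root, so each of its eigenspaces is invariant under the reflections. By irreducibility `T` is a
scalar `μ`, and comparing traces gives `μ · rank = ∑ ⟪γ, γ⟫ = 2 |A| = 2 h · rank`. Hence the sum,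
which is `⟪T α, β⟫`, equals `2 h ⟪α, β⟫`. -/

/-- Schur's lemma. -/
theorem Module.End.eq_smul_one_of_hasEigenvalue_of_commute {R M : Type*} [CommRing R]
    [AddCommGroup M] [Module R M] {T : End R M} {μ : R} (hμ : T.HasEigenvalue μ)
    {G : Set (End R M)}
    (hG : ∀ W : Submodule R M, (∀ g ∈ G, W ∈ g.invtSubmodule) → W = ⊥ ∨ W = ⊤)
    (hTG : ∀ g ∈ G, Commute T g) :
    T = μ • 1 := by
  have hinv : ∀ g ∈ G, T.eigenspace μ ∈ g.invtSubmodule := fun g hg =>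
    (mem_invtSubmodule_iff_mapsTo _).mpr (mapsTo_genEigenspace_of_comm (hTG g hg) μ 1)
  have htop : T.eigenspace μ = ⊤ := (hG _ hinv).resolve_left (hasEigenvalue_iff.mp hμ)
  ext x
  exact mem_eigenspace_iff.mp (htop ▸ Submodule.mem_top)

section

variable {V : Type*} [NormedAddCommGroup V] [InnerProductSpace ℝ V]

theorem inner_eq_zero_of_mem_invtSubmodule_preReflection {W : Submodule ℝ V} {γ w : V}
    (hW : W ∈ (preReflection γ (innerₛₗ ℝ γ)).invtSubmodule) (hγ : γ ∉ W) (hw : w ∈ W) :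
    ⟪γ, w⟫ = 0 := by
  by_contra hne
  have hsmul : ⟪γ, w⟫ • γ ∈ W := by
    simpa [preReflection_apply] using W.sub_mem hw (hW hw)
  exact hγ ((W.smul_mem_iff hne).mp hsmul)

theorem Submodule.eq_bot_or_eq_top_of_forall_mem_invtSubmodule_preReflection {A : Finset V}
    (hspan : Submodule.span ℝ (A : Set V) = ⊤)
    (hirr : ∀ S ⊆ A, (∀ γ ∈ S, ∀ δ ∈ A, δ ∉ S → ⟪γ, δ⟫ = 0) → S = ∅ ∨ S = A)
    (W : Submodule ℝ V) (hW : ∀ γ ∈ A, W ∈ (preReflection γ (innerₛₗ ℝ γ)).invtSubmodule) :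
    W = ⊥ ∨ W = ⊤ := by
  classical
  have horth : ∀ δ ∈ A, δ ∉ W → ∀ w ∈ W, ⟪δ, w⟫ = 0 := fun δ hδ hδW _ hw =>
    inner_eq_zero_of_mem_invtSubmodule_preReflection (hW δ hδ) hδW hw
  rcases hirr (A.filter (· ∈ W)) (Finset.filter_subset _ _) (fun γ hγ δ hδ hδS => by
      rw [Finset.mem_filter] at hγ hδS
      rw [real_inner_comm]
      exact horth δ hδ (fun h => hδS ⟨hδ, h⟩) γ hγ.2) with hS | hS
  · left
    have hle : Submodule.span ℝ (A : Set V) ≤ Wᗮ := by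
      rw [Submodule.span_le]
      intro δ hδ
      have hδW : δ ∉ W := fun h => Finset.notMem_empty δ (hS ▸ Finset.mem_filter.mpr ⟨hδ, h⟩)
      exact (Submodule.mem_orthogonal' W δ).mpr (horth δ hδ hδW)
    rw [hspan, top_le_iff, Submodule.orthogonal_eq_top_iff] at hle
    exact hle
  · right
    rw [eq_top_iff, ← hspan, Submodule.span_le]
    intro δ hδ
    rw [Finset.mem_coe, ← hS, Finset.mem_filter] at hδ
    exact hδ.2

theorem preReflection_isSymmetric (γ : V) :
    (preReflection γ (innerₛₗ ℝ γ)).IsSymmetric := by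
  intro x y
  simp only [preReflection_apply, innerₛₗ_apply_apply, inner_sub_left, inner_sub_right,
    real_inner_smul_left, real_inner_smul_right, real_inner_comm γ x]
  ring

noncomputable def frameOperator (A : Finset V) : V →ₗ[ℝ] V :=
  ∑ γ ∈ A, (innerₛₗ ℝ γ).smulRight γ

section

variable (A : Finset V)

theorem frameOperator_apply (x : V) : frameOperator A x = ∑ γ ∈ A, ⟪γ, x⟫ • γ := by
  simp [frameOperator, LinearMap.sum_apply]

theorem inner_frameOperator_left (x y : V) :
    ⟪frameOperator A x, y⟫ = ∑ γ ∈ A, ⟪γ, x⟫ * ⟪γ, y⟫ := by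
  simp only [frameOperator_apply, sum_inner, real_inner_smul_left]

theorem frameOperator_isSymmetric : (frameOperator A).IsSymmetric := by
  intro x y
  rw [inner_frameOperator_left, real_inner_comm, inner_frameOperator_left]
  exact Finset.sum_congr rfl fun _ _ => mul_comm _ _

theorem trace_frameOperator [FiniteDimensional ℝ V] :
    LinearMap.trace ℝ V (frameOperator A) = ∑ γ ∈ A, ⟪γ, γ⟫ := by
  simp [frameOperator, map_sum]

end

theorem commute_frameOperator {A : Finset V} {g : V →ₗ[ℝ] V} (hg : g.IsSymmetric)
    (hA : ∀ γ ∈ A, g γ ∈ A) (hinv : ∀ γ ∈ A, g (g γ) = γ) :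
    Commute (frameOperator A) g := by
  refine LinearMap.ext fun x => ?_
  change frameOperator A (g x) = g (frameOperator A x)
  rw [frameOperator_apply, frameOperator_apply, map_sum]
  refine Finset.sum_nbij' g g hA hA hinv hinv fun δ hδ => ?_
  rw [map_smul, ← hg, hinv δ hδ]

end

theorem sum_inner_mul_inner_eq_two_coxeter_mul_general
    {V : Type*} [NormedAddCommGroup V] [InnerProductSpace ℝ V]
    [FiniteDimensional ℝ V]
    (A : Finset V) (h : ℕ)
    (hspan : Submodule.span ℝ (A : Set V) = ⊤)
    (hnorm : ∀ γ ∈ A, ⟪γ, γ⟫ = 2)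
    (hrefl : ∀ γ ∈ A, ∀ δ ∈ A, δ - ⟪γ, δ⟫ • γ ∈ A)
    (hirr : ∀ S ⊆ A, (∀ γ ∈ S, ∀ δ ∈ A, δ ∉ S → ⟪γ, δ⟫ = 0) → S = ∅ ∨ S = A)
    (hcard : A.card = Module.finrank ℝ V * h)
    (α β : V) (hα : α ∈ A) :
    ∑ γ ∈ A, ⟪α, γ⟫ * ⟪β, γ⟫ = 2 * (h : ℝ) * ⟪α, β⟫ := by
  have : Nontrivial V := ⟨α, 0, fun h0 => by simpa [h0] using hnorm α hα⟩
  obtain ⟨μ, hμ⟩ : ∃ μ : ℝ, HasEigenvalue (frameOperator A) μ :=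
    ⟨_, (frameOperator_isSymmetric A).hasEigenvalue_iSup_of_finiteDimensional⟩
  have hT : frameOperator A = μ • 1 :=
    eq_smul_one_of_hasEigenvalue_of_commute hμ
      (G := (fun γ => preReflection γ (innerₛₗ ℝ γ)) '' A)
      (fun W hW => W.eq_bot_or_eq_top_of_forall_mem_invtSubmodule_preReflection hspan hirr
        (Set.forall_mem_image.mp hW))
      (Set.forall_mem_image.mpr fun γ hγ =>
        commute_frameOperator (preReflection_isSymmetric γ) (hrefl γ hγ)
          fun δ _ => involutive_preReflection (hnorm γ hγ) δ)
  have hμh : μ = 2 * h := by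
    have htr := trace_frameOperator A
    rw [hT, Finset.sum_congr rfl hnorm, map_smul, LinearMap.trace_one, Finset.sum_const,
      hcard] at htr
    have hn : (finrank ℝ V : ℝ) ≠ 0 := Nat.cast_ne_zero.mpr finrank_pos.ne'
    simp only [nsmul_eq_mul, smul_eq_mul, Nat.cast_mul] at htr
    apply mul_right_cancel₀ hn
    linarith
  calc ∑ γ ∈ A, ⟪α, γ⟫ * ⟪β, γ⟫ = ⟪frameOperator A α, β⟫ := by
        rw [inner_frameOperator_left]
        exact Finset.sum_congr rfl fun γ _ => by rw [real_inner_comm α, real_inner_comm β]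
    _ = 2 * (h : ℝ) * ⟪α, β⟫ := by
        simp [hT, real_inner_smul_left, hμh]

/-- For a finite crystallographic simply-laced (ADE) root system `A` with Coxeter
number `h`, for any two roots `α, β` one has `∑_{γ∈A} ⟪α,γ⟫⟪β,γ⟫ = 2h⟪α,β⟫`. -/
theorem sum_inner_mul_inner_eq_two_coxeter_mul
    {V : Type*} [NormedAddCommGroup V] [InnerProductSpace ℝ V]
    [FiniteDimensional ℝ V]
    (A : Finset V) (h : ℕ)
    (hspan : Submodule.span ℝ (A : Set V) = ⊤)
    (hnorm : ∀ γ ∈ A, ⟪γ, γ⟫ = 2)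
    (hrefl : ∀ γ ∈ A, ∀ δ ∈ A, δ - ⟪γ, δ⟫ • γ ∈ A)
    (hcrys : ∀ γ ∈ A, ∀ δ ∈ A, ∃ n : ℤ, ⟪γ, δ⟫ = (n : ℝ))
    (hirr : ∀ S ⊆ A, (∀ γ ∈ S, ∀ δ ∈ A, δ ∉ S → ⟪γ, δ⟫ = 0) → S = ∅ ∨ S = A)
    (hcard : A.card = Module.finrank ℝ V * h)
    (α β : V) (hα : α ∈ A) (hβ : β ∈ A) :
    ∑ γ ∈ A, ⟪α, γ⟫ * ⟪β, γ⟫ = 2 * (h : ℝ) * ⟪α, β⟫ :=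
  sum_inner_mul_inner_eq_two_coxeter_mul_general A h hspan hnorm hrefl hirr hcard α β hα
end

section
/- The Dedekind-type sum identity: for every integer N ≥ 1, Σ_{k=1}^{N} 1/sin²(πk/(N+1)) = N(N+2)/3. -/
/-!
Put `n = N + 1` and `ω = exp (2iθ)`. Then `(1 - ω)² = -4 ω sin² θ`, and when `ω` is a nontrivial
`n`-th root of unity, `(1 - ω)² ∑_{j<n} j (n - j) ωʲ = 2 n ω`, because the second difference of
`j ↦ j (n - j)` is constant. This is the finite Fourier expansion
`1 / sin² (πk/n) = -(2/n) ∑_{j<n} j (n - j) ζ^{jk}` with `ζ = exp (2πi/n)`. Summing over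
`k = 1, …, n - 1`, orthogonality gives `∑_k ζ^{jk} = -1` for `0 < j < n`, so the sum equals
`(2/n) ∑_{j<n} j (n - j) = (n² - 1) / 3`.
-/

open Real Finset

section GeomSum

variable {R : Type*} [CommRing R]

theorem sum_range_succ_mul_sub_mul (f : ℕ → R) (n : ℕ) :
    ∑ j ∈ range (n + 1), (j : R) * ((n + 1 : ℕ) - j) * f j
      = ∑ j ∈ range n, (j : R) * (n - j) * f j + ∑ j ∈ range (n + 1), (j : R) * f j := by
  rw [sum_range_succ _ n, sum_range_succ _ n, ← add_assoc, ← sum_add_distrib]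
  push_cast
  congr 1
  · exact sum_congr rfl fun j _ => by ring
  · ring

theorem sum_range_mul_sub (n : ℕ) :
    6 * ∑ j ∈ range n, (j : R) * (n - j) = (n - 1) * n * (n + 1) := by
  induction n with
  | zero => simp
  | succ n ih =>
    have hgauss : (∑ j ∈ range (n + 1), (j : R)) * 2 = ((n : R) + 1) * n := by
      have h := congrArg (Nat.cast : ℕ → R) (sum_range_id_mul_two (n + 1))
      push_cast at h
      simpa using h
    have hsplit := sum_range_succ_mul_sub_mul (fun _ => (1 : R)) n
    simp only [mul_one] at hsplit
    rw [hsplit]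
    push_cast
    linear_combination ih + 3 * hgauss

theorem one_sub_mul_sum_range_mul_pow (z : R) (n : ℕ) :
    (1 - z) * ∑ j ∈ range n, (j : R) * z ^ j = z * ∑ j ∈ range n, z ^ j - n * z ^ n := by
  induction n with
  | zero => simp
  | succ n ih =>
    rw [sum_range_succ, sum_range_succ, mul_add, ih]
    push_cast
    ring

theorem sq_one_sub_mul_sum_range_mul_sub_mul_pow (z : R) (n : ℕ) :
    (1 - z) ^ 2 * ∑ j ∈ range n, (j : R) * (n - j) * z ^ j
      = (n + 1) * z + (n - 1) * z ^ (n + 1) - 2 * z * ∑ j ∈ range n, z ^ j := by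
  induction n with
  | zero => simp
  | succ n ih =>
    have hS := one_sub_mul_sum_range_mul_pow z (n + 1)
    rw [sum_range_succ_mul_sub_mul, sum_range_succ (fun j => z ^ j)]
    rw [sum_range_succ (fun j => z ^ j)] at hS
    push_cast at hS ⊢
    linear_combination ih + (1 - z) * hS + z * mul_neg_geom_sum z n

end GeomSum

theorem geom_sum_eq_zero_of_pow_eq_one {K : Type*} [DivisionRing K] {x : K} {n : ℕ}
    (hxn : x ^ n = 1) (hx : x ≠ 1) : ∑ i ∈ range n, x ^ i = 0 := by
  rw [geom_sum_eq hx, hxn, sub_self, zero_div]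

theorem IsPrimitiveRoot.sum_Icc_pow_pow_eq_neg_one {K : Type*} [Field K] {ζ : K} {N j : ℕ}
    (hζ : IsPrimitiveRoot ζ (N + 1)) (hj0 : j ≠ 0) (hj : j < N + 1) :
    ∑ k ∈ Icc 1 N, (ζ ^ j) ^ k = -1 := by
  have h := geom_sum_eq_zero_of_pow_eq_one (by rw [pow_right_comm, hζ.pow_eq_one, one_pow])
    (hζ.pow_ne_one_of_pos_of_lt hj0 hj)
  rw [sum_range_eq_add_Ico _ N.succ_pos, Nat.succ_eq_add_one, Ico_add_one_right_eq_Icc,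
    pow_zero] at h
  exact eq_neg_of_add_eq_zero_right h

namespace Complex

theorem one_sub_exp_two_mul_I_sq (θ : ℂ) :
    (1 - exp (2 * θ * I)) ^ 2 = -4 * exp (2 * θ * I) * sin θ ^ 2 := by
  have hw : exp (2 * θ * I) = exp (θ * I) ^ 2 := by rw [← exp_nat_mul]; ring_nf
  have hneg : exp (-θ * I) = (exp (θ * I))⁻¹ := by rw [← exp_neg]; ring_nf
  have h0 := exp_ne_zero (θ * I)
  rw [hw, sin, hneg]
  field_simp
  linear_combination (4 * exp (θ * I) ^ 4 - 8 * exp (θ * I) ^ 2 + 4) * I_sq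

theorem one_div_sin_sq_eq_sum {θ : ℂ} {n : ℕ} (hn : n ≠ 0) (hωn : exp (2 * θ * I) ^ n = 1)
    (hω : exp (2 * θ * I) ≠ 1) :
    1 / sin θ ^ 2 = -(2 / n) * ∑ j ∈ range n, (j : ℂ) * (n - j) * exp (2 * θ * I) ^ j := by
  have hT : (1 - exp (2 * θ * I)) ^ 2 * ∑ j ∈ range n, (j : ℂ) * (n - j) * exp (2 * θ * I) ^ j
      = 2 * n * exp (2 * θ * I) := by
    rw [sq_one_sub_mul_sum_range_mul_sub_mul_pow, geom_sum_eq_zero_of_pow_eq_one hωn hω,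
      pow_succ, hωn]
    ring
  have hsin : sin θ ≠ 0 := by
    intro h
    apply hω
    have := one_sub_exp_two_mul_I_sq θ
    rw [h, zero_pow two_ne_zero, mul_zero, sq_eq_zero_iff, sub_eq_zero] at this
    exact this.symm
  rw [one_sub_exp_two_mul_I_sq] at hT
  have hω0 := exp_ne_zero (2 * θ * I)
  have hn' : (n : ℂ) ≠ 0 := Nat.cast_ne_zero.2 hn
  field_simp
  apply mul_left_cancel₀ hω0
  linear_combination (-1 / 2) * hT

theorem one_div_sin_sq_pi_mul_div_eq_sum {n k : ℕ} (hk0 : k ≠ 0) (hkn : k < n) :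
    1 / sin (π * k / n) ^ 2
      = -(2 / n) * ∑ j ∈ range n, (j : ℂ) * (n - j) * (exp (2 * π * I / n) ^ j) ^ k := by
  have hζ := isPrimitiveRoot_exp n (by omega)
  have hexp : exp (2 * (π * k / n) * I) = exp (2 * π * I / n) ^ k := by
    rw [← exp_nat_mul]
    ring_nf
  rw [one_div_sin_sq_eq_sum (n := n) (by omega), hexp]
  · simp only [← pow_mul, mul_comm k]
  · rw [hexp, pow_right_comm, hζ.pow_eq_one, one_pow]
  · rw [hexp]
    exact hζ.pow_ne_one_of_pos_of_lt hk0 hkn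

end Complex

theorem sum_inv_sin_sq_general (N : ℕ) :
    ∑ k ∈ Finset.Icc 1 N, 1 / Real.sin (π * (k : ℝ) / ((N : ℝ) + 1)) ^ 2
      = (N : ℝ) * ((N : ℝ) + 2) / 3 := by
  apply Complex.ofReal_injective
  push_cast
  have hζ := Complex.isPrimitiveRoot_exp (N + 1) N.succ_ne_zero
  have hterm : ∀ k ∈ Icc 1 N, 1 / Complex.sin (π * k / (N + 1)) ^ 2
      = -(2 / (N + 1 : ℕ)) * ∑ j ∈ range (N + 1),
          (j : ℂ) * ((N + 1 : ℕ) - j) * (Complex.exp (2 * π * Complex.I / (N + 1 : ℕ)) ^ j) ^ k := by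
    intro k hk
    rw [mem_Icc] at hk
    exact_mod_cast Complex.one_div_sin_sq_pi_mul_div_eq_sum (n := N + 1) (by omega) (by omega)
  have hinner : ∀ j ∈ range (N + 1), (j : ℂ) * ((N + 1 : ℕ) - j)
        * ∑ k ∈ Icc 1 N, (Complex.exp (2 * π * Complex.I / (N + 1 : ℕ)) ^ j) ^ k
      = -((j : ℂ) * ((N + 1 : ℕ) - j)) := by
    intro j hj
    rcases Nat.eq_zero_or_pos j with rfl | hj0
    · simp
    · rw [hζ.sum_Icc_pow_pow_eq_neg_one hj0.ne' (mem_range.1 hj), mul_neg_one]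
  rw [sum_congr rfl hterm, ← mul_sum, sum_comm]
  simp only [← mul_sum]
  rw [sum_congr rfl hinner, sum_neg_distrib]
  have hsum := sum_range_mul_sub (R := ℂ) (N + 1)
  push_cast at hsum ⊢
  field_simp
  linear_combination hsum

/-- Dedekind-type sum: for every integer `N ≥ 1`,
`∑_{k=1}^{N} 1 / sin²(πk/(N+1)) = N (N+2) / 3`. -/
theorem sum_inv_sin_sq (N : ℕ) (hN : 1 ≤ N) :
    ∑ k ∈ Finset.Icc 1 N, 1 / Real.sin (π * (k : ℝ) / ((N : ℝ) + 1)) ^ 2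
      = (N : ℝ) * ((N : ℝ) + 2) / 3 :=
  sum_inv_sin_sq_general N
end

section
/- For every integer N ≥ 2, Σ_{k=1}^{N−2} tan²(πk/(2N−2)) = (N−2)(2N−3)/3. -/
/-!
The numbers `tan² (π k / 2n)`, `0 < k < n`, are exactly the roots of the degree `n - 1`
polynomial `P n = ∑_m (-1)^m C(2n, 2m+1) X^m`: indeed `tan θ · P n (tan² θ)` is the imaginary
part of `(1 + i tan θ)^(2n) = e^(2niθ) / cos^(2n) θ`, namely `sin (2nθ) / cos^(2n) θ`, which
vanishes at `θ = π k / 2n`. By Vieta the sum of the roots is minus the ratio of the two top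
coefficients, `C(2n, 3) / 2n = (n - 1)(2n - 1) / 3`; then put `n = N - 1`.
-/

open Real Polynomial Finset

theorem Polynomial.sum_eq_neg_nextCoeff_div_leadingCoeff {K ι : Type*} [Field K] {p : K[X]}
    {s : Finset ι} {f : ι → K} (hp : p ≠ 0) (hf : Set.InjOn f s)
    (hroot : ∀ i ∈ s, p.IsRoot (f i)) (hcard : #s = p.natDegree) :
    ∑ i ∈ s, f i = -p.nextCoeff / p.leadingCoeff := by
  have hle : s.val.map f ≤ p.roots :=
    (Multiset.le_iff_subset (s.nodup.map_on hf)).2 fun x hx ↦ by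
      obtain ⟨i, hi, rfl⟩ := Multiset.mem_map.1 hx
      exact (mem_roots hp).2 (hroot i hi)
  have hroots : p.roots = s.val.map f :=
    (Multiset.eq_of_le_of_card_le hle (by simpa [hcard] using card_roots' p)).symm
  have hsplit : p.Splits := splits_iff_card_roots.2 (by simp [hroots, hcard])
  rw [hsplit.nextCoeff_eq_neg_sum_roots_mul_leadingCoeff, hroots, neg_mul, neg_neg,
    mul_div_cancel_left₀ _ (leadingCoeff_ne_zero.2 hp)]
  rfl

theorem Finset.sum_range_two_mul {M : Type*} [AddCommMonoid M] (f : ℕ → M) (n : ℕ) :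
    ∑ j ∈ range (2 * n), f j = ∑ m ∈ range n, (f (2 * m) + f (2 * m + 1)) := by
  induction n with
  | zero => simp
  | succ n ih => rw [mul_add_one, sum_range_succ, sum_range_succ, sum_range_succ, ih, add_assoc]

namespace Complex

theorem im_one_add_mul_I_pow_two_mul (t : ℝ) (n : ℕ) :
    ((1 + t * I) ^ (2 * n)).im =
      ∑ m ∈ range n, (-1) ^ m * ((2 * n).choose (2 * m + 1) : ℝ) * t ^ (2 * m + 1) := by
  have even_pow (m : ℕ) : (t * I) ^ (2 * m) = ((-t ^ 2) ^ m : ℝ) := by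
    push_cast; rw [pow_mul, mul_pow, I_sq, mul_neg_one]
  have odd_pow (m : ℕ) : (t * I) ^ (2 * m + 1) = ((-1) ^ m * t ^ (2 * m + 1) : ℝ) * I := by
    push_cast; rw [pow_succ, even_pow]; push_cast; ring
  rw [add_comm, add_pow, sum_range_succ, sum_range_two_mul, add_im, im_sum]
  simp only [even_pow, odd_pow, one_pow, mul_one, add_im, mul_im, ofReal_re, ofReal_im, I_re, I_im,
    natCast_re, natCast_im]
  simpa using sum_congr rfl fun m _ ↦ mul_right_comm _ _ _

end Complex

noncomputable def tanSqPoly (n : ℕ) : ℝ[X] :=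
  ∑ m ∈ range n, C ((-1) ^ m * ((2 * n).choose (2 * m + 1) : ℝ)) * X ^ m

theorem tanSqPoly_coeff (n j : ℕ) :
    (tanSqPoly n).coeff j = if j < n then (-1) ^ j * ((2 * n).choose (2 * j + 1) : ℝ) else 0 := by
  simp only [tanSqPoly, finsetSum_coeff, coeff_C_mul_X_pow]
  simp

theorem natDegree_tanSqPoly (n : ℕ) : (tanSqPoly (n + 1)).natDegree = n := by
  refine natDegree_eq_of_le_of_coeff_ne_zero ?_ ?_
  · exact (natDegree_le_iff_coeff_eq_zero).2 fun j hj ↦ by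
      rw [tanSqPoly_coeff, if_neg (by omega)]
  · rw [tanSqPoly_coeff, if_pos (by omega)]
    exact mul_ne_zero (by simp) (by simp [Nat.choose_eq_zero_iff])

theorem leadingCoeff_tanSqPoly (n : ℕ) :
    (tanSqPoly (n + 1)).leadingCoeff = (-1) ^ n * (2 * n + 2) := by
  rw [leadingCoeff, natDegree_tanSqPoly, tanSqPoly_coeff, if_pos (by omega),
    show 2 * (n + 1) = 2 * n + 1 + 1 by ring, Nat.choose_succ_self_right]
  push_cast; ring

theorem nextCoeff_tanSqPoly (m : ℕ) :
    (tanSqPoly (m + 2)).nextCoeff = (-1) ^ m * ((2 * m + 4) * (2 * m + 3) * (2 * m + 2) / 6) := by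
  rw [nextCoeff, natDegree_tanSqPoly, if_neg m.succ_ne_zero, Nat.add_sub_cancel, tanSqPoly_coeff,
    if_pos (by omega), Nat.choose_symm_of_eq_add (by ring : 2 * (m + 2) = 2 * m + 1 + 3),
    Nat.cast_choose ℝ (by omega), show 2 * (m + 2) - 3 = 2 * m + 1 by omega,
    show 2 * (m + 2) = 2 * m + 1 + 1 + 1 + 1 by ring]
  simp only [Nat.factorial_succ]
  push_cast
  field_simp
  ring

theorem neg_nextCoeff_div_leadingCoeff_tanSqPoly (m : ℕ) :
    -(tanSqPoly (m + 2)).nextCoeff / (tanSqPoly (m + 2)).leadingCoeff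
      = (m + 1) * (2 * m + 3) / 3 := by
  rw [nextCoeff_tanSqPoly, leadingCoeff_tanSqPoly, pow_succ]
  push_cast
  field_simp
  ring

open Complex in
theorem tan_mul_eval_tanSqPoly (n : ℕ) {θ : ℝ} (hθ : Real.cos θ ≠ 0) :
    Real.tan θ * (tanSqPoly n).eval (Real.tan θ ^ 2)
      = Real.sin (2 * n * θ) / Real.cos θ ^ (2 * n) := by
  have hcos : Complex.cos θ ≠ 0 := by rw [← ofReal_cos]; exact ofReal_ne_zero.2 hθ
  calc Real.tan θ * (tanSqPoly n).eval (Real.tan θ ^ 2)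
      = ((1 + Real.tan θ * I) ^ (2 * n)).im := by
        rw [im_one_add_mul_I_pow_two_mul, tanSqPoly, eval_finsetSum, mul_sum]
        refine sum_congr rfl fun m _ ↦ ?_
        simp only [eval_mul, eval_C, eval_pow, eval_X]
        ring
    _ = ((Real.cos (2 * n * θ) + Real.sin (2 * n * θ) * I)
          / (Real.cos θ ^ (2 * n) : ℝ)).im := by
        have hone : 1 + Real.tan θ * I
            = (Complex.cos θ + Complex.sin θ * I) / Complex.cos θ := by
          rw [Real.tan_eq_sin_div_cos]
          push_cast
          field_simp
        rw [hone, div_pow, cos_add_sin_mul_I_pow]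
        push_cast
        ring_nf
    _ = Real.sin (2 * n * θ) / Real.cos θ ^ (2 * n) := by
        rw [div_ofReal_im, add_im, ofReal_im, mul_I_im, ofReal_re, zero_add]

theorem pi_mul_div_two_mul_mem_Ioo {k n : ℕ} (hk₀ : 0 < k) (hkn : k < n) :
    π * k / (2 * n) ∈ Set.Ioo 0 (π / 2) := by
  have hk : (0 : ℝ) < k := by exact_mod_cast hk₀
  have hkn' : (k : ℝ) < n := by exact_mod_cast hkn
  have hn : (0 : ℝ) < n := hk.trans hkn'
  constructor
  · positivity
  · rw [div_lt_div_iff₀ (by positivity) two_pos]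
    nlinarith [pi_pos]

theorem isRoot_tanSqPoly {k n : ℕ} (hk₀ : 0 < k) (hkn : k < n) :
    (tanSqPoly n).IsRoot (tan (π * k / (2 * n)) ^ 2) := by
  obtain ⟨hpos, hlt⟩ := pi_mul_div_two_mul_mem_Ioo hk₀ hkn
  have hcos : cos (π * k / (2 * n)) ≠ 0 := (cos_pos_of_mem_Ioo ⟨by linarith, hlt⟩).ne'
  have htan : tan (π * k / (2 * n)) ≠ 0 := (tan_pos_of_pos_of_lt_pi_div_two hpos hlt).ne'
  have hn : (n : ℝ) ≠ 0 := by exact_mod_cast (hk₀.trans hkn).ne'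
  have h := tan_mul_eval_tanSqPoly n hcos
  rw [show 2 * n * (π * k / (2 * n)) = k * π by field_simp, sin_nat_mul_pi, zero_div] at h
  exact (mul_eq_zero.1 h).resolve_left htan

theorem injOn_tan_sq_pi_mul_div_two_mul (n : ℕ) :
    Set.InjOn (fun k : ℕ ↦ tan (π * k / (2 * n)) ^ 2) (Set.Ioo 0 n) := by
  intro k hk l hl hkl
  obtain ⟨hk₀, hk₁⟩ := pi_mul_div_two_mul_mem_Ioo hk.1 hk.2
  obtain ⟨hl₀, hl₁⟩ := pi_mul_div_two_mul_mem_Ioo hl.1 hl.2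
  have htan := (pow_left_inj₀ (tan_pos_of_pos_of_lt_pi_div_two hk₀ hk₁).le
    (tan_pos_of_pos_of_lt_pi_div_two hl₀ hl₁).le two_ne_zero).1 hkl
  have h := injOn_tan ⟨by linarith, hk₁⟩ ⟨by linarith, hl₁⟩ htan
  have hn : (n : ℝ) ≠ 0 := by exact_mod_cast (hk.1.trans hk.2).ne'
  field_simp at h
  exact_mod_cast h

theorem sum_tan_sq_pi_mul_div_two_mul {n : ℕ} (hn : 1 ≤ n) :
    ∑ k ∈ Icc 1 (n - 1), tan (π * k / (2 * n)) ^ 2 = ((n : ℝ) - 1) * (2 * n - 1) / 3 := by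
  obtain rfl | ⟨m, rfl⟩ : n = 1 ∨ ∃ m, n = m + 2 := by
    rcases n with _ | _ | m <;> simp_all
  · norm_num
  have hs : ∀ k ∈ Icc 1 (m + 2 - 1), 0 < k ∧ k < m + 2 := fun k hk ↦ by
    simp only [mem_Icc] at hk; omega
  rw [sum_eq_neg_nextCoeff_div_leadingCoeff (p := tanSqPoly (m + 2))
      (leadingCoeff_ne_zero.1 (by rw [leadingCoeff_tanSqPoly]; positivity))
      ((injOn_tan_sq_pi_mul_div_two_mul _).mono fun k hk ↦ hs k hk)
      (fun k hk ↦ isRoot_tanSqPoly (hs k hk).1 (hs k hk).2)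
      (by rw [natDegree_tanSqPoly, Nat.card_Icc]; omega),
    neg_nextCoeff_div_leadingCoeff_tanSqPoly]
  push_cast
  ring

/-- For every integer `N ≥ 2`, `∑_{k=1}^{N−2} tan²(πk/(2N−2)) = (N−2)(2N−3)/3`. -/
theorem sum_tan_sq (N : ℕ) (hN : 2 ≤ N) :
    ∑ k ∈ Finset.Icc 1 (N - 2), Real.tan (π * (k : ℝ) / (2 * (N : ℝ) - 2)) ^ 2
      = ((N : ℝ) - 2) * (2 * (N : ℝ) - 3) / 3 := by
  obtain ⟨n, rfl⟩ : ∃ n, N = n + 1 := ⟨N - 1, by omega⟩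
  have hangle (k : ℕ) : π * k / (2 * ((n + 1 : ℕ) : ℝ) - 2) = π * k / (2 * n) := by
    push_cast; ring_nf
  simp only [hangle, show n + 1 - 2 = n - 1 by omega,
    sum_tan_sq_pi_mul_div_two_mul (by omega : 1 ≤ n)]
  push_cast
  ring
end

section
/- Let η = exp(2πi/(N+1)). Then Σ_{k=1}^{N} (N+1)/(2 − η^k − η^{−k}) = N(N+1)(N+2)/12. -/
open Complex
open Finset
lemma aux_sum (n : ℕ) (ζ : ℂ) (hζn : ζ ^ n = 1) (hζ1 : ζ ≠ 1) :
    (ζ - 1) * ∑ j ∈ range n, (j : ℂ) * ζ ^ j = n := by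
  have hg : ∑ j ∈ range n, ζ ^ j = 0 := by
    rw [geom_sum_eq hζ1 n, hζn, sub_self, zero_div]
  have key : (ζ - 1) * ∑ j ∈ range n, (j : ℂ) * ζ ^ j
      = (∑ j ∈ range n, ((((j+1 : ℕ)) : ℂ) * ζ ^ (j+1) - (j : ℂ) * ζ ^ j))
        - ζ * ∑ j ∈ range n, ζ ^ j := by
    rw [Finset.mul_sum, Finset.mul_sum, ← Finset.sum_sub_distrib]
    apply Finset.sum_congr rfl
    intro j _
    push_cast
    ring
  rw [key, Finset.sum_range_sub (fun j => (j : ℂ) * ζ ^ j), hg, hζn]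
  simp

lemma aux_term (n : ℕ) (hn : (n:ℂ) ≠ 0) (ζ : ℂ) (hζ0 : ζ ≠ 0) (hζn : ζ ^ n = 1) (hζ1 : ζ ≠ 1) :
    (n:ℂ) / (2 - ζ - ζ⁻¹)
      = (∑ j ∈ range n, (j:ℂ) * ζ ^ j) * (∑ j ∈ range n, (j:ℂ) * (ζ⁻¹) ^ j) / n := by
  have hinvn : (ζ⁻¹) ^ n = 1 := by rw [inv_pow, hζn, inv_one]
  have hinv1 : ζ⁻¹ ≠ 1 := by
    intro h; exact hζ1 (by rwa [inv_eq_one] at h)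
  have hS := aux_sum n ζ hζn hζ1
  have hS' := aux_sum n ζ⁻¹ hinvn hinv1
  have h1 : ζ - 1 ≠ 0 := sub_ne_zero.mpr hζ1
  have h2 : ζ⁻¹ - 1 ≠ 0 := sub_ne_zero.mpr hinv1
  have hfac : 2 - ζ - ζ⁻¹ = (ζ - 1) * (ζ⁻¹ - 1) := by
    field_simp
    ring
  have hA : 2 - ζ - ζ⁻¹ ≠ 0 := by rw [hfac]; exact mul_ne_zero h1 h2
  rw [div_eq_div_iff hA hn]
  calc (n:ℂ) * n = ((ζ-1) * ∑ j ∈ range n, (j:ℂ) * ζ ^ j)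
        * ((ζ⁻¹-1) * ∑ j ∈ range n, (j:ℂ) * (ζ⁻¹) ^ j) := by rw [hS, hS']
    _ = (∑ j ∈ range n, (j:ℂ) * ζ ^ j) * (∑ j ∈ range n, (j:ℂ) * (ζ⁻¹) ^ j)
        * (2 - ζ - ζ⁻¹) := by rw [hfac]; ring

lemma aux_orth (N : ℕ) (η : ℂ) (hprim : IsPrimitiveRoot η (N+1))
    (j l : ℕ) (hj : j < N+1) (hl : l < N+1) :
    ∑ k ∈ Icc 1 N, (η ^ ((j:ℤ) - l)) ^ k = if j = l then (N:ℂ) else -1 := by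
  by_cases hjl : j = l
  · subst hjl
    rw [if_pos rfl, sub_self, zpow_zero]
    simp
  · set μ : ℂ := η ^ ((j:ℤ) - l) with hμ
    simp only [if_neg hjl]
    have hμ1 : μ ≠ 1 := by
      intro h
      have hdvd := (hprim.zpow_eq_one_iff_dvd _).mp h
      have hne : (j:ℤ) - l ≠ 0 := by
        intro h0; apply hjl; omega
      have habs : ((j:ℤ) - l).natAbs < ((N+1:ℕ):ℤ).natAbs := by
        simp only [Int.natAbs_natCast]
        omega
      exact hne (Int.eq_zero_of_dvd_of_natAbs_lt_natAbs (by exact_mod_cast hdvd) habs)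
    have hμn : μ ^ (N+1) = 1 := by
      rw [hμ, ← zpow_natCast, ← zpow_mul, mul_comm, zpow_mul, zpow_natCast,
        hprim.pow_eq_one, one_zpow]
    have hg : ∑ k ∈ range (N+1), μ ^ k = 0 := by
      rw [geom_sum_eq hμ1, hμn, sub_self, zero_div]
    have h1 : ∑ k ∈ Icc 1 N, μ ^ k = ∑ k ∈ range N, μ ^ (1 + k) := by
      rw [← Finset.Ico_add_one_right_eq_Icc, Finset.sum_Ico_eq_sum_range]
      simp
    have h2 : ∑ k ∈ range (N+1), μ ^ k = (∑ k ∈ range N, μ ^ (k+1)) + μ ^ 0 :=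
      Finset.sum_range_succ' _ _
    rw [h1]
    simp only [pow_zero] at h2
    have h3 : ∑ k ∈ range N, μ ^ (1+k) = ∑ k ∈ range N, μ ^ (k+1) := by
      apply Finset.sum_congr rfl; intro k _; rw [add_comm]
    rw [h3]
    rw [h2] at hg
    linear_combination hg

lemma sum_id (n : ℕ) : ∑ j ∈ range n, (j : ℂ) = n * (n - 1) / 2 := by
  induction n with
  | zero => simp
  | succ m ih => rw [Finset.sum_range_succ, ih]; push_cast; ring

lemma sum_sq (n : ℕ) : ∑ j ∈ range n, (j : ℂ)^2 = n * (n - 1) * (2 * n - 1) / 6 := by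
  induction n with
  | zero => simp
  | succ m ih => rw [Finset.sum_range_succ, ih]; push_cast; ring


/-- With `η = exp(2πi/(N+1))`, `∑_{k=1}^{N} (N+1)/(2 − η^k − η^{−k}) = N(N+1)(N+2)/12`. -/
theorem sum_kac_wakimoto_A (N : ℕ) (hN : 0 < N) (η : ℂ)
    (hη : η = Complex.exp (2 * Real.pi * Complex.I / ((N : ℂ) + 1))) :
    ∑ k ∈ Finset.Icc 1 N, ((N : ℂ) + 1) / (2 - η ^ k - η ^ (-(k : ℤ)))
      = (N : ℂ) * ((N : ℂ) + 1) * ((N : ℂ) + 2) / 12 := by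
  have hn0 : ((N:ℂ) + 1) ≠ 0 := by
    have : ((N+1 : ℕ) : ℂ) ≠ 0 := Nat.cast_ne_zero.mpr (by omega)
    push_cast at this
    exact this
  have hprim : IsPrimitiveRoot η (N+1) := by
    rw [hη, show ((N:ℂ) + 1) = ((N+1 : ℕ) : ℂ) by push_cast; ring]
    exact Complex.isPrimitiveRoot_exp _ (by omega)
  have hη0 : η ≠ 0 := by rw [hη]; exact Complex.exp_ne_zero _
  have hηn : η ^ (N+1) = 1 := hprim.pow_eq_one
  -- per-term rewrite
  have hterm : ∀ k ∈ Icc 1 N, ((N:ℂ) + 1) / (2 - η ^ k - η ^ (-(k:ℤ)))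
      = (∑ j ∈ range (N+1), (j:ℂ) * (η^k) ^ j)
        * (∑ j ∈ range (N+1), (j:ℂ) * ((η^k)⁻¹) ^ j) / ((N:ℂ)+1) := by
    intro k hk
    rw [Finset.mem_Icc] at hk
    have hζn : (η^k) ^ (N+1) = 1 := by
      rw [← pow_mul, mul_comm, pow_mul, hηn, one_pow]
    have hζ1 : η^k ≠ 1 := hprim.pow_ne_one_of_pos_of_lt (by omega) (by omega)
    have hζ0 : η^k ≠ 0 := pow_ne_zero _ hη0
    have hinv : η ^ (-(k:ℤ)) = (η^k)⁻¹ := by rw [zpow_neg, zpow_natCast]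
    rw [hinv]
    have := aux_term (N+1) (by push_cast; exact hn0) (η^k) hζ0 hζn hζ1
    push_cast at this ⊢
    exact this
  rw [Finset.sum_congr rfl hterm, ← Finset.sum_div]
  -- big swap
  have hpt : ∀ (k j l : ℕ), ((j:ℂ) * (η^k) ^ j) * ((l:ℂ) * ((η^k)⁻¹) ^ l)
      = ((j:ℂ) * l) * (η ^ ((j:ℤ) - l)) ^ k := by
    intro k j l
    have e1 : (η^k) ^ j = η ^ ((k : ℤ) * j) := by
      rw [← zpow_natCast η k, ← zpow_natCast (η ^ (k:ℤ)) j, ← zpow_mul]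
    have e2 : ((η^k)⁻¹) ^ l = η ^ (-((k:ℤ) * l)) := by
      rw [← zpow_natCast η k, ← zpow_neg, ← zpow_natCast (η ^ (-(k:ℤ))) l, ← zpow_mul]
      congr 1
      ring
    have e3 : (η ^ ((j:ℤ) - l)) ^ k = η ^ (((j:ℤ) - l) * k) := by
      rw [← zpow_natCast (η ^ ((j:ℤ) - l)) k, ← zpow_mul]
    rw [e1, e2, e3]
    rw [show ((j:ℤ) - l) * k = (k:ℤ) * j + (-((k:ℤ) * l)) by ring, zpow_add₀ hη0]
    ring
  have hbig : ∑ k ∈ Icc 1 N, ((∑ j ∈ range (N+1), (j:ℂ) * (η^k) ^ j)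
        * (∑ j ∈ range (N+1), (j:ℂ) * ((η^k)⁻¹) ^ j))
      = ((N:ℂ)+1) * (∑ j ∈ range (N+1), (j:ℂ)^2)
        - (∑ j ∈ range (N+1), (j:ℂ))^2 := by
    calc ∑ k ∈ Icc 1 N, ((∑ j ∈ range (N+1), (j:ℂ) * (η^k) ^ j)
            * (∑ j ∈ range (N+1), (j:ℂ) * ((η^k)⁻¹) ^ j))
        = ∑ k ∈ Icc 1 N, ∑ j ∈ range (N+1), ∑ l ∈ range (N+1),
            ((j:ℂ) * l) * (η ^ ((j:ℤ) - l)) ^ k := by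
          apply Finset.sum_congr rfl
          intro k _
          rw [Finset.sum_mul_sum]
          exact Finset.sum_congr rfl fun j _ => Finset.sum_congr rfl fun l _ => hpt k j l
      _ = ∑ j ∈ range (N+1), ∑ l ∈ range (N+1), ((j:ℂ) * l) *
            ∑ k ∈ Icc 1 N, (η ^ ((j:ℤ) - l)) ^ k := by
          rw [Finset.sum_comm]
          apply Finset.sum_congr rfl
          intro j _
          rw [Finset.sum_comm]
          apply Finset.sum_congr rfl
          intro l _
          rw [Finset.mul_sum]
      _ = ∑ j ∈ range (N+1), ∑ l ∈ range (N+1), ((j:ℂ) * l) *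
            (if j = l then (N:ℂ) else -1) := by
          apply Finset.sum_congr rfl
          intro j hj
          apply Finset.sum_congr rfl
          intro l hl
          rw [aux_orth N η hprim j l (Finset.mem_range.mp hj) (Finset.mem_range.mp hl)]
      _ = ∑ j ∈ range (N+1), (((N:ℂ)+1) * (j:ℂ)^2 - (j:ℂ) * ∑ l ∈ range (N+1), (l:ℂ)) := by
          apply Finset.sum_congr rfl
          intro j hj
          calc ∑ l ∈ range (N+1), ((j:ℂ) * l) * (if j = l then (N:ℂ) else -1)
              = ∑ l ∈ range (N+1),
                  (((N:ℂ)+1) * (if j = l then (j:ℂ) * l else 0) - (j:ℂ) * l) := by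
                apply Finset.sum_congr rfl
                intro l _
                split_ifs with h
                · ring
                · ring
            _ = ((N:ℂ)+1) * (j:ℂ)^2 - (j:ℂ) * ∑ l ∈ range (N+1), (l:ℂ) := by
                rw [Finset.sum_sub_distrib, ← Finset.mul_sum, Finset.sum_ite_eq,
                  if_pos hj, ← Finset.mul_sum]
                ring
      _ = ((N:ℂ)+1) * (∑ j ∈ range (N+1), (j:ℂ)^2) - (∑ j ∈ range (N+1), (j:ℂ))^2 := by
          rw [Finset.sum_sub_distrib, ← Finset.mul_sum, ← Finset.sum_mul]
          ring
  rw [hbig, sum_id, sum_sq]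
  push_cast
  field_simp
  ring
end

section
/- In type D_N, the sum of the Kac–Wakimoto coefficients equals (N−1)N(2N−1)/6: with η = exp(πi/(N−1)), Σ_{i=1}^{N−2} (N−1)/2 · (2−η^i−η^{−i})/(2+η^i+η^{−i}) + 2·(N−1)²/2 = (N−1)N(2N−1)/6. -/
/-!
For a primitive `m`-th root of unity `ζ` and `u = ζ ^ j ≠ 1`, the number
`((1 + u) / (1 - u)) ^ 2 = -cot² (π j / m)` is `1` plus a polynomial in `u` without constant
term: since `(1 - u) ^ 2 * ∑_{k<m} k (m - k) u ^ k = 2 m u` whenever `u ^ m = 1`, it equals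
`1 + (2 / m) ∑_{k<m} k (m - k) u ^ k`. Summing over `j = 1, …, m - 1`, every power `u ^ k` with
`0 < k < m` contributes `-1`, which gives the classical `∑ cot² (π j / m) = (m - 1)(m - 2) / 3`.

With `w = η ^ i` the Kac–Wakimoto summand is
`-((1 - w) / (1 + w)) ^ 2 = tan² (π i / (2N - 2))`. For `m = 2n`, `n = N - 1`, the reflections
`j = n - i` and `j = n + i` turn `((1 + η ^ j) / (1 - η ^ j)) ^ 2` into
`((1 - η ^ i) / (1 + η ^ i)) ^ 2`, while `j = n` contributes `0`; so the sum of the summands is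
minus half the cotangent sum, and the theorem becomes a polynomial identity in `N`.
-/

open Finset

section CommRing

variable {R : Type*} [CommRing R]

theorem sum_range_mul_pow_mul_one_sub_sq (x : R) (m : ℕ) :
    (∑ k ∈ range m, (k : R) * x ^ k) * (1 - x) ^ 2 = x - m * x ^ m + (m - 1) * x ^ (m + 1) := by
  induction m with
  | zero => simp
  | succ m ih => rw [sum_range_succ, add_mul, ih]; push_cast; ring

theorem sum_range_mul_succ_sub_mul_pow (x : R) (m : ℕ) :
    ∑ k ∈ range (m + 1), (k * ((m + 1 : ℕ) - k) : R) * x ^ k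
      = ∑ k ∈ range m, (k * (m - k) : R) * x ^ k
        + ∑ k ∈ range (m + 1), (k : R) * x ^ k := by
  rw [sum_range_succ, sum_range_succ _ m, ← add_assoc, ← sum_add_distrib]
  push_cast
  congr 1
  · exact sum_congr rfl fun k _ => by ring
  · ring

theorem sum_range_mul_sub_mul_pow_mul_one_sub_sq (x : R) (m : ℕ) :
    (∑ k ∈ range m, (k * (m - k) : R) * x ^ k) * (1 - x) ^ 2
        + 2 * ∑ k ∈ range (m + 1), x ^ k
      = 2 + (m + 1) * x + (m - 1) * x ^ (m + 1) := by
  induction m with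
  | zero => simp
  | succ m ih =>
    rw [sum_range_mul_succ_sub_mul_pow, add_mul, sum_range_mul_pow_mul_one_sub_sq,
      sum_range_succ _ (m + 1)]
    push_cast
    linear_combination ih

theorem six_mul_sum_range_mul_sub (m : ℕ) :
    6 * ∑ k ∈ range m, (k * (m - k) : R) = (m - 1) * m * (m + 1) := by
  induction m with
  | zero => simp
  | succ m ih =>
    have hgauss : (∑ k ∈ range (m + 1), (k : R)) * 2 = ((m : R) + 1) * m := by
      have h := congrArg (Nat.cast (R := R)) (sum_range_id_mul_two (m + 1))
      push_cast [Nat.add_sub_cancel] at h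
      exact h
    have hsucc := sum_range_mul_succ_sub_mul_pow (1 : R) m
    simp only [one_pow, mul_one] at hsucc
    rw [hsucc]
    push_cast
    linear_combination ih + 3 * hgauss

end CommRing

theorem Finset.sum_Ico_one_two_mul {M : Type*} [AddCommMonoid M] (h : ℕ → M) {n : ℕ}
    (hn : 0 < n) :
    ∑ j ∈ Ico 1 (2 * n), h j = h n + ∑ i ∈ Ico 1 n, (h (n - i) + h (n + i)) := by
  rw [sum_add_distrib, sum_Ico_reflect h 1 n.le_succ, sum_Ico_add, Nat.add_sub_cancel_left,
    Nat.add_sub_cancel, ← sum_Ico_consecutive h hn (by omega : n ≤ 2 * n),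
    sum_eq_sum_Ico_succ_bot (by omega : n < 2 * n), two_mul, add_comm 1 n]
  abel

section Field

variable {K : Type*} [Field K]

theorem two_sub_sub_inv_div_two_add_add_inv {w : K} (hw : w ≠ 0) :
    (2 - w - w⁻¹) / (2 + w + w⁻¹) = -((1 - w) / (1 + w)) ^ 2 := by
  rw [show 2 - w - w⁻¹ = -(1 - w) ^ 2 / w by field_simp; ring,
    show 2 + w + w⁻¹ = (1 + w) ^ 2 / w by field_simp; ring,
    div_div_div_cancel_right₀ hw, neg_div, div_pow]

theorem sq_one_sub_inv_div_one_add_inv {w : K} (hw : w ≠ 0) :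
    ((1 - w⁻¹) / (1 + w⁻¹)) ^ 2 = ((1 - w) / (1 + w)) ^ 2 := by
  rw [show 1 - w⁻¹ = -(1 - w) / w by field_simp; ring,
    show 1 + w⁻¹ = (1 + w) / w by field_simp; ring,
    div_div_div_cancel_right₀ hw, neg_div, neg_sq]

theorem sum_range_mul_sub_mul_pow_mul_one_sub_sq_of_pow_eq_one {u : K} {m : ℕ}
    (hum : u ^ m = 1) (hu : u ≠ 1) :
    (∑ k ∈ range m, (k * (m - k) : K) * u ^ k) * (1 - u) ^ 2 = 2 * m * u := by
  have hgeom : ∑ k ∈ range m, u ^ k = 0 := by rw [geom_sum_eq hu, hum, sub_self, zero_div]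
  have h := sum_range_mul_sub_mul_pow_mul_one_sub_sq u m
  rw [sum_range_succ, hgeom, pow_succ u m, hum] at h
  linear_combination h

theorem sq_one_add_div_one_sub_of_pow_eq_one {u : K} {m : ℕ} (hum : u ^ m = 1) (hu : u ≠ 1)
    (hm : (m : K) ≠ 0) :
    ((1 + u) / (1 - u)) ^ 2 = 1 + 2 / m * ∑ k ∈ range m, (k * (m - k) : K) * u ^ k := by
  have hu' : 1 - u ≠ 0 := sub_ne_zero.mpr hu.symm
  rw [div_pow, div_eq_iff (pow_ne_zero 2 hu'), add_mul, mul_assoc,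
    sum_range_mul_sub_mul_pow_mul_one_sub_sq_of_pow_eq_one hum hu]
  field_simp
  ring

namespace IsPrimitiveRoot

section

variable {ζ : K} {m : ℕ}

theorem sum_Ico_pow_pow_eq_neg_one (hζ : IsPrimitiveRoot ζ m) {k : ℕ} (hk : 0 < k)
    (hkm : k < m) :
    ∑ j ∈ Ico 1 m, (ζ ^ j) ^ k = -1 := by
  have hζk : ζ ^ k ≠ 1 := hζ.pow_ne_one_of_pos_of_lt hk.ne' hkm
  have hgeom : ∑ j ∈ range m, (ζ ^ k) ^ j = 0 := by
    rw [geom_sum_eq hζk, ← pow_mul, mul_comm, pow_mul, hζ.pow_eq_one, one_pow, sub_self,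
      zero_div]
  rw [sum_range_eq_add_Ico _ (hk.trans hkm), pow_zero] at hgeom
  simp_rw [pow_right_comm ζ _ k]
  linear_combination hgeom

theorem three_mul_sum_Ico_sq_one_add_div_one_sub (hζ : IsPrimitiveRoot ζ m) (hm : (m : K) ≠ 0) :
    3 * ∑ j ∈ Ico 1 m, ((1 + ζ ^ j) / (1 - ζ ^ j)) ^ 2 = -(((m : K) - 1) * (m - 2)) := by
  have hm0 : 0 < m := Nat.pos_of_ne_zero (by rintro rfl; simp at hm)
  have hexpand : ∀ j ∈ Ico 1 m, ((1 + ζ ^ j) / (1 - ζ ^ j)) ^ 2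
      = 1 + 2 / m * ∑ k ∈ range m, (k * (m - k) : K) * (ζ ^ j) ^ k := fun j hj =>
    sq_one_add_div_one_sub_of_pow_eq_one (by rw [pow_right_comm, hζ.pow_eq_one, one_pow])
      (hζ.pow_ne_one_of_pos_of_lt (by grind) (mem_Ico.mp hj).2) hm
  have hinner : ∑ j ∈ Ico 1 m, ∑ k ∈ range m, (k * (m - k) : K) * (ζ ^ j) ^ k
      = -∑ k ∈ range m, (k * (m - k) : K) := by
    rw [sum_comm, ← sum_neg_distrib]
    refine sum_congr rfl fun k hk => ?_
    rw [← mul_sum]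
    rcases Nat.eq_zero_or_pos k with rfl | hk0
    · simp
    · rw [hζ.sum_Ico_pow_pow_eq_neg_one hk0 (mem_range.mp hk), mul_neg_one]
  rw [sum_congr rfl hexpand, sum_add_distrib, ← mul_sum, hinner, sum_const, Nat.card_Ico,
    nsmul_one, Nat.cast_sub hm0]
  have h6 := six_mul_sum_range_mul_sub (R := K) m
  field_simp
  linear_combination -h6

end

variable {η : K} {n : ℕ}

theorem pow_half_eq_neg_one (hη : IsPrimitiveRoot η (2 * n)) (hn : n ≠ 0) : η ^ n = -1 := by
  have hsq := hη.pow_of_dvd hn (dvd_mul_left n 2)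
  rw [Nat.mul_div_cancel _ (Nat.pos_of_ne_zero hn)] at hsq
  exact hsq.eq_neg_one_of_two_right

theorem sum_Ico_sq_one_add_div_one_sub_eq_two_mul (hη : IsPrimitiveRoot η (2 * n)) (hn : 0 < n) :
    ∑ j ∈ Ico 1 (2 * n), ((1 + η ^ j) / (1 - η ^ j)) ^ 2
      = 2 * ∑ i ∈ Ico 1 n, ((1 - η ^ i) / (1 + η ^ i)) ^ 2 := by
  have hηn := hη.pow_half_eq_neg_one hn.ne'
  rw [sum_Ico_one_two_mul _ hn, hηn, add_neg_cancel, zero_div, zero_pow two_ne_zero, zero_add,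
    two_mul, ← sum_add_distrib]
  refine sum_congr rfl fun i hi => ?_
  have hηi : η ^ i ≠ 0 := pow_ne_zero i (hη.ne_zero (by omega))
  have hreflect : η ^ (n - i) = -(η ^ i)⁻¹ := by
    rw [← neg_one_mul, ← div_eq_mul_inv, eq_div_iff hηi, ← pow_add,
      Nat.sub_add_cancel (mem_Ico.mp hi).2.le, hηn]
  have hshift : η ^ (n + i) = -η ^ i := by rw [pow_add, hηn, neg_one_mul]
  rw [hreflect, hshift, sub_neg_eq_add, ← sub_eq_add_neg, sub_neg_eq_add, ← sub_eq_add_neg,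
    sq_one_sub_inv_div_one_add_inv hηi]

theorem three_mul_sum_Ico_sq_one_sub_div_one_add (hη : IsPrimitiveRoot η (2 * n))
    (hn : ((2 * n : ℕ) : K) ≠ 0) :
    3 * ∑ i ∈ Ico 1 n, ((1 - η ^ i) / (1 + η ^ i)) ^ 2 = -(((n : K) - 1) * (2 * n - 1)) := by
  have hn0 : 0 < n := Nat.pos_of_ne_zero (by rintro rfl; simp at hn)
  have h2 : (2 : K) ≠ 0 := by rintro h; simp [h] at hn
  have hcot := hη.three_mul_sum_Ico_sq_one_add_div_one_sub hn
  rw [hη.sum_Ico_sq_one_add_div_one_sub_eq_two_mul hn0] at hcot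
  push_cast at hcot
  apply mul_left_cancel₀ h2
  linear_combination hcot

end IsPrimitiveRoot

end Field

/-- Type `D_N`: with `η = exp(πi/(N−1))`, the sum of the Kac–Wakimoto coefficients
`∑_{i=1}^{N−2} (N−1)/2 · (2−η^i−η^{−i})/(2+η^i+η^{−i}) + 2 · (N−1)²/2`
equals `(N−1) N (2N−1)/6`. -/
theorem sum_g_D (N : ℕ) (hN : 3 ≤ N) (η : ℂ)
    (hη : η = Complex.exp (Real.pi * Complex.I / ((N : ℂ) - 1))) :
    (∑ i ∈ Finset.Icc 1 (N - 2),
        ((N : ℂ) - 1) / 2 * ((2 - η ^ i - η ^ (-(i : ℤ))) / (2 + η ^ i + η ^ (-(i : ℤ)))))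
      + 2 * (((N : ℂ) - 1) ^ 2 / 2)
      = ((N : ℂ) - 1) * (N : ℂ) * (2 * (N : ℂ) - 1) / 6 := by
  obtain ⟨n, rfl⟩ : ∃ n, N = n + 1 := ⟨N - 1, by omega⟩
  have hprim : IsPrimitiveRoot η (2 * n) := by
    convert Complex.isPrimitiveRoot_exp (2 * n) (by omega) using 2
    rw [hη]
    push_cast [add_sub_cancel_right]
    field_simp
  have hsum := hprim.three_mul_sum_Ico_sq_one_sub_div_one_add (by norm_cast; omega)
  have hIcc : Icc 1 (n + 1 - 2) = Ico 1 n := by ext; simp; omega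
  simp_rw [zpow_neg, zpow_natCast,
    two_sub_sub_inv_div_two_add_add_inv (pow_ne_zero _ (hprim.ne_zero (by omega)))]
  rw [hIcc, ← mul_sum, sum_neg_distrib]
  push_cast
  linear_combination (-(n : ℂ) / 6) * hsum
end
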